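/- arXiv:1506.07699 — 4 statements merged into one kernel-verified Lean document; each statement's English description precedes it below -/
import Mathlib

section
/- Let A₁,…,Aₙ be real symmetric r×r matrices and M = x₀·I_r − (A₁x₁ + ⋯ + Aₙxₙ), a matrix of linear forms in variables x₀,…,xₙ. Let h ∈ ℝ[x₀,…,xₙ] be an irreducible polynomial whose real zero set is Zariski dense in its complex zero set, and let m ≥ 1. If h^m divides det(M), then h divides every (r−m+1)×(r−m+1) minor of M. -/
/-!
At a real zero `a` of `h`, the substitution `x = a + t e₀` turns `det M` into the characteristic
polynomial of the real symmetric matrix `T = ∑ aₖ Aₖ - a₀ I`, which `h ^ m` forces to be divisible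
by `t ^ m`. As `T` is diagonalizable, `0` is then an eigenvalue of geometric multiplicity `≥ m`,
so `M(a) = -T` has rank `≤ r - m` and its minors of size `r - m + 1` vanish. Hence every such
minor of `M` vanishes on the real zeros of `h`, by density on its complex zeros, and the
Nullstellensatz together with the primality of `h` gives `h ∣ minor`.
-/

open MvPolynomial

theorem Irreducible.dvd_of_forall_aeval_eq_zero {k K σ : Type*} [Field k] [Field K]
    [Algebra k K] [IsAlgClosed K] [Finite σ] {h f : MvPolynomial σ k} (hirr : Irreducible h)
    (hf : ∀ z : σ → K, aeval z h = 0 → aeval z f = 0) : h ∣ f := by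
  have hmem : f ∈ (Ideal.span {h}).radical := by
    rw [← vanishingIdeal_zeroLocus_eq_radical (K := K), mem_vanishingIdeal_iff]
    exact fun z hz => hf z (hz h (Ideal.mem_span_singleton_self h))
  obtain ⟨N, hN⟩ := hmem
  exact hirr.prime.dvd_of_dvd_pow (Ideal.mem_span_singleton.mp hN)

theorem Irreducible.dvd_of_forall_eval_eq_zero_of_real_zeros_dense {σ : Type*} [Finite σ]
    {h f : MvPolynomial σ ℝ} (hirr : Irreducible h)
    (hdense : ∀ z : σ → ℂ, aeval z h = 0 →
      ∀ q : MvPolynomial σ ℂ,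
        (∀ a : σ → ℝ, eval a h = 0 → eval (fun i => (a i : ℂ)) q = 0) → eval z q = 0)
    (hf : ∀ a : σ → ℝ, eval a h = 0 → eval a f = 0) : h ∣ f := by
  refine hirr.dvd_of_forall_aeval_eq_zero (K := ℂ) fun z hz => ?_
  rw [aeval_def, ← eval_map]
  refine hdense z hz _ fun a ha => ?_
  rw [eval_map, ← aeval_def, show (fun i => (a i : ℂ)) = algebraMap ℝ ℂ ∘ a from rfl,
    aeval_algebraMap_apply]
  simpa using hf a ha

namespace Matrix

theorem det_submatrix_eq_zero_of_rank_lt {m n K : Type*} [Fintype n] [Field K] {s : ℕ}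
    (B : Matrix m n K) (ρ : Fin s → m) (κ : Fin s → n) (hB : B.rank < s) :
    (B.submatrix ρ κ).det = 0 := by
  by_contra hdet
  have hunit : IsUnit (B.submatrix ρ κ) := (isUnit_iff_isUnit_det _).mpr (Ne.isUnit hdet)
  have := B.rank_submatrix_le ρ κ
  rw [rank_of_isUnit _ hunit, Fintype.card_fin] at this
  omega

theorem IsHermitian.rank_add_le_card_of_X_pow_dvd_charpoly {𝕜 n : Type*} [RCLike 𝕜]
    [Fintype n] [DecidableEq n] {B : Matrix n n 𝕜} (hB : B.IsHermitian) {m : ℕ}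
    (hdvd : Polynomial.X ^ m ∣ B.charpoly) : B.rank + m ≤ Fintype.card n := by
  have hmult : m ≤ Fintype.card {i // hB.eigenvalues i = 0} := by
    have hroot : m ≤ B.charpoly.rootMultiplicity 0 := by
      rw [Polynomial.le_rootMultiplicity_iff B.charpoly_monic.ne_zero, map_zero, sub_zero]
      exact hdvd
    rw [← Polynomial.count_roots, hB.roots_charpoly_eq_eigenvalues, Multiset.count_map] at hroot
    simpa [Fintype.card_subtype, Finset.card, Finset.filter_val, eq_comm (a := (0 : 𝕜))]
      using hroot
  rw [hB.rank_eq_card_non_zero_eigs, Fintype.card_subtype_compl]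
  have := Fintype.card_subtype_le fun i => hB.eigenvalues i = 0
  omega

end Matrix

namespace MvPolynomial

variable {R σ : Type*} [CommRing R]

/-- `restrictLine a v p` is the polynomial `t ↦ p (a + t • v)`. -/
noncomputable def restrictLine (a v : σ → R) : MvPolynomial σ R →ₐ[R] Polynomial R :=
  aeval fun i => Polynomial.C (a i) + Polynomial.C (v i) * Polynomial.X

theorem eval_zero_restrictLine (a v : σ → R) (p : MvPolynomial σ R) :
    (restrictLine a v p).eval 0 = eval a p := by
  rw [restrictLine, ← Polynomial.coe_aeval_eq_eval, ← AlgHom.comp_apply, comp_aeval]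
  simp

end MvPolynomial

section LinearPencil

variable {R ι : Type*} [CommRing R] [DecidableEq ι] {n : ℕ}

noncomputable def linearPencil (A : Fin n → Matrix ι ι R) :
    Matrix ι ι (MvPolynomial (Fin (n + 1)) R) :=
  Matrix.of fun i j => (if i = j then X 0 else 0) - ∑ k : Fin n, C (A k i j) * X k.succ

theorem linearPencil_map_eval (A : Fin n → Matrix ι ι R) (a : Fin (n + 1) → R) :
    (linearPencil A).map (eval a) = a 0 • 1 - ∑ k, a k.succ • A k := by
  refine Matrix.ext fun i j => ?_
  by_cases hij : i = j <;> simp [linearPencil, hij, Matrix.sum_apply, mul_comm]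

theorem linearPencil_map_restrictLine [Fintype ι] (A : Fin n → Matrix ι ι R)
    (a : Fin (n + 1) → R) :
    (linearPencil A).map (restrictLine a (Pi.single 0 1)) =
      Matrix.charmatrix (∑ k, a k.succ • A k - a 0 • 1) := by
  refine Matrix.ext fun i j => ?_
  by_cases hij : i = j <;>
    simp [linearPencil, restrictLine, hij, Matrix.sum_apply, mul_comm (Polynomial.C (A _ _ _))]
  ring

theorem X_pow_dvd_charpoly_of_pow_dvd_det_linearPencil [Fintype ι] (A : Fin n → Matrix ι ι R)
    {h : MvPolynomial (Fin (n + 1)) R} {m : ℕ} (hdvd : h ^ m ∣ (linearPencil A).det)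
    {a : Fin (n + 1) → R} (ha : eval a h = 0) :
    Polynomial.X ^ m ∣ (∑ k, a k.succ • A k - a 0 • 1).charpoly := by
  set φ := restrictLine a (Pi.single 0 1)
  have hX : Polynomial.X ∣ φ h := by
    rw [Polynomial.X_dvd_iff, Polynomial.coeff_zero_eq_eval_zero, eval_zero_restrictLine, ha]
  calc Polynomial.X ^ m ∣ φ h ^ m := pow_dvd_pow_of_dvd hX m
    _ ∣ φ (linearPencil A).det := by rw [← map_pow]; exact map_dvd φ hdvd
    _ = _ := by rw [AlgHom.map_det, AlgHom.mapMatrix_apply, linearPencil_map_restrictLine]; rfl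

theorem eval_det_submatrix_linearPencil_eq_zero [Fintype ι] {A : Fin n → Matrix ι ι ℝ}
    (hA : ∀ k, (A k).IsSymm) {h : MvPolynomial (Fin (n + 1)) ℝ} {m : ℕ}
    (hdvd : h ^ m ∣ (linearPencil A).det) {a : Fin (n + 1) → ℝ} (ha : eval a h = 0) {s : ℕ}
    (hs : Fintype.card ι < s + m) (ρ κ : Fin s → ι) :
    eval a ((linearPencil A).submatrix ρ κ).det = 0 := by
  set T := ∑ k, a k.succ • A k - a 0 • (1 : Matrix ι ι ℝ)
  have hT : T.IsHermitian := by
    refine Matrix.isHermitian_iff_isSymm.mpr (Matrix.IsSymm.sub ?_ (Matrix.isSymm_one.smul _))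
    simp only [Matrix.IsSymm, Matrix.transpose_sum, Matrix.transpose_smul, (hA _).eq]
  have hrank := hT.rank_add_le_card_of_X_pow_dvd_charpoly
    (X_pow_dvd_charpoly_of_pow_dvd_det_linearPencil A hdvd ha)
  have hmap : (linearPencil A).map (eval a) = -T := by rw [linearPencil_map_eval, neg_sub]
  rw [RingHom.map_det, RingHom.mapMatrix_apply, ← Matrix.submatrix_map, hmap,
    show (-T).submatrix ρ κ = -T.submatrix ρ κ from rfl, Matrix.det_neg,
    T.det_submatrix_eq_zero_of_rank_lt ρ κ (by omega), mul_zero]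

end LinearPencil

theorem stmt_0_general (n r m : ℕ) (A : Fin n → Matrix (Fin r) (Fin r) ℝ)
    (hA : ∀ k, (A k).IsSymm)
    (M : Matrix (Fin r) (Fin r) (MvPolynomial (Fin (n + 1)) ℝ))
    (hM : M = Matrix.of fun i j =>
      (if i = j then (X 0 : MvPolynomial (Fin (n + 1)) ℝ) else 0)
        - ∑ k : Fin n, C (A k i j) * X k.succ)
    (h : MvPolynomial (Fin (n + 1)) ℝ) (hirr : Irreducible h)
    -- the real zero set of `h` is Zariski dense in its complex zero set:
    (hdense : ∀ z : Fin (n + 1) → ℂ, aeval z h = 0 →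
      ∀ q : MvPolynomial (Fin (n + 1)) ℂ,
        (∀ a : Fin (n + 1) → ℝ, eval a h = 0 → eval (fun i => (a i : ℂ)) q = 0) →
        eval z q = 0)
    (hdvd : h ^ m ∣ M.det) :
    ∀ ρ κ : Fin (r - m + 1) → Fin r, Function.Injective ρ → Function.Injective κ →
      h ∣ (M.submatrix ρ κ).det := by
  intro ρ κ _ _
  subst hM
  refine hirr.dvd_of_forall_eval_eq_zero_of_real_zeros_dense hdense fun a ha => ?_
  exact eval_det_submatrix_linearPencil_eq_zero hA hdvd ha (by rw [Fintype.card_fin]; omega) ρ κ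

/-- if `h^m` divides `det M`, every `(r-m+1)×(r-m+1)` minor of `M`
is divisible by `h`. -/
theorem stmt_0 (n r m : ℕ) (A : Fin n → Matrix (Fin r) (Fin r) ℝ)
    (hA : ∀ k, (A k).IsSymm)
    (M : Matrix (Fin r) (Fin r) (MvPolynomial (Fin (n + 1)) ℝ))
    (hM : M = Matrix.of fun i j =>
      (if i = j then (X 0 : MvPolynomial (Fin (n + 1)) ℝ) else 0)
        - ∑ k : Fin n, C (A k i j) * X k.succ)
    (h : MvPolynomial (Fin (n + 1)) ℝ) (hirr : Irreducible h)
    -- the real zero set of `h` is Zariski dense in its complex zero set: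
    (hdense : ∀ z : Fin (n + 1) → ℂ, aeval z h = 0 →
      ∀ q : MvPolynomial (Fin (n + 1)) ℂ,
        (∀ a : Fin (n + 1) → ℝ, eval a h = 0 → eval (fun i => (a i : ℂ)) q = 0) →
        eval z q = 0)
    (hm : 1 ≤ m) (hdvd : h ^ m ∣ M.det) :
    ∀ ρ κ : Fin (r - m + 1) → Fin r, Function.Injective ρ → Function.Injective κ →
      h ∣ (M.submatrix ρ κ).det :=
  stmt_0_general n r m A hA M hM h hirr hdense hdvd
end

section
/- Let n > 2^k for a non-negative integer k and let r ≤ 2^k. Then there do not exist nonzero polynomials g₁, g₂ ∈ ℝ[x₁,…,xₙ], each a sum of r squares of polynomials, with (x₁² + ⋯ + xₙ²)·g₁ = g₂. -/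
/-!
Pass to the fraction field of `ℝ[x₁, …, xₙ]`. There `g₁⁻¹ = g₁ · (g₁⁻¹)²` is again a sum of
`r ≤ 2^k` squares, so `x₁² + ⋯ + xₙ² = g₂ · g₁⁻¹` is a product of two sums of `2^k` squares, hence
itself a sum of `2^k` squares by Pfister: a sum `c` of `2^k` squares admits a matrix `A` with
`Aᵀ A = c · 1`, built recursively from `2 × 2` block matrices, and then `c · ‖v‖² = ‖A v‖²`.

This contradicts Cassels–Pfister: over a formally real field `F`, `x₁² + ⋯ + xₙ²` is not a sum of
`m < n` squares in `F(x₁, …, xₙ)`. Induct on `m`, viewing `F(x₁, …, xₙ)` inside `K(x₁)` with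
`K = F(x₂, …, xₙ)`. Cassels' descent on the degree of a common denominator turns a representation
of `x₁² + d` by `m` squares of rational functions into one by squares of polynomials, necessarily
linear in `x₁`; substituting for `x₁` a value `c` with `w₁(c)² = c²` writes `d = x₂² + ⋯ + xₙ²` as
a sum of `m - 1` squares in `K`.
-/

section SumsOfSquares

open Polynomial

section FormallyReal

variable {R : Type*} [CommRing R]

theorem IsSumSq.exists_eq_fin_sum_sq {s : R} (hs : IsSumSq s) :
    ∃ (m : ℕ) (f : Fin m → R), s = ∑ i, f i ^ 2 := by
  induction hs with
  | zero => exact ⟨0, Fin.elim0, by simp⟩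
  | sq_add a _ ih =>
    obtain ⟨m, f, rfl⟩ := ih
    exact ⟨m + 1, Fin.cons a f, by simp [Fin.sum_univ_succ, sq]⟩

theorem IsFormallyReal.of_sum_sq_eq_zero
    (h : ∀ (m : ℕ) (f : Fin m → R), ∑ i, f i ^ 2 = 0 → ∀ i, f i = 0) : IsFormallyReal R :=
  .of_eq_zero_of_eq_zero_of_mul_self_add fun {_ a} hs has => by
    obtain ⟨m, f, rfl⟩ := hs.exists_eq_fin_sum_sq
    exact h (m + 1) (Fin.cons a f) (by simpa [Fin.sum_univ_succ, sq] using has) 0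

theorem IsFormallyReal.eq_zero_of_sum_sq_eq_zero [IsFormallyReal R] {ι : Type*} [Fintype ι]
    {f : ι → R} (h : ∑ i, f i ^ 2 = 0) (i : ι) : f i = 0 := by
  classical
  rw [← Finset.add_sum_erase _ _ (Finset.mem_univ i)] at h
  exact IsReduced.eq_zero _
    ⟨2, eq_zero_of_add_right (IsSquare.sq (f i)).isSumSq (IsSumSq.sum_sq _ _) h⟩

theorem IsFormallyReal.of_injective {S : Type*} [CommRing S] [IsFormallyReal S] (φ : R →+* S)
    (hφ : Function.Injective φ) : IsFormallyReal R :=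
  .of_sum_sq_eq_zero fun _ f h i => hφ <| by
    rw [map_zero]
    exact eq_zero_of_sum_sq_eq_zero (f := φ ∘ f) (by simpa using congrArg φ h) i

theorem IsFormallyReal.two_ne_zero [Nontrivial R] [IsFormallyReal R] : (2 : R) ≠ 0 := fun h =>
  one_ne_zero <| eq_zero_of_sum_sq_eq_zero (f := fun _ : Fin 2 => (1 : R)) (by simpa using h) 0

namespace Polynomial

variable {ι : Type*} [Fintype ι]

theorem exists_coeff_sum_sq_ne_zero [IsFormallyReal R] {f : ι → R[X]} (hf : ∃ i, f i ≠ 0) :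
    ∃ D, (∀ i, (f i).natDegree ≤ D) ∧ (∑ i, f i ^ 2).coeff (2 * D) ≠ 0 := by
  classical
  obtain ⟨j, hj⟩ := hf
  obtain ⟨i₀, hi₀, hmax⟩ :=
    (Finset.univ.filter (f · ≠ 0)).exists_max_image (natDegree ∘ f) ⟨j, by simpa⟩
  have hle : ∀ i, (f i).natDegree ≤ (f i₀).natDegree := fun i => by
    by_cases hi : f i = 0
    · simp [hi]
    · exact hmax i (by simpa)
  refine ⟨_, hle, fun h => ?_⟩
  rw [finsetSum_coeff, Finset.sum_congr rfl fun i _ => coeff_pow_of_natDegree_le (hle i)] at h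
  exact (Finset.mem_filter.mp hi₀).2
    (leadingCoeff_eq_zero.mp (IsFormallyReal.eq_zero_of_sum_sq_eq_zero h i₀))

instance [IsFormallyReal R] : IsFormallyReal R[X] :=
  .of_sum_sq_eq_zero fun _ f h i => by
    by_contra hi
    obtain ⟨D, -, hD⟩ := exists_coeff_sum_sq_ne_zero ⟨i, hi⟩
    exact hD (by rw [h, coeff_zero])

theorem two_mul_natDegree_le_natDegree_sum_sq [IsFormallyReal R] (f : ι → R[X]) (i : ι) :
    2 * (f i).natDegree ≤ (∑ j, f j ^ 2).natDegree := by
  by_cases hi : f i = 0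
  · simp [hi]
  obtain ⟨D, hle, hD⟩ := exists_coeff_sum_sq_ne_zero ⟨i, hi⟩
  exact (Nat.mul_le_mul_left 2 (hle i)).trans (le_natDegree_of_ne_zero hD)

end Polynomial

instance MvPolynomial.isFormallyReal_fin [IsFormallyReal R] :
    (n : ℕ) → IsFormallyReal (MvPolynomial (Fin n) R)
  | 0 => .of_injective (MvPolynomial.isEmptyAlgEquiv R (Fin 0)).toRingHom
      (MvPolynomial.isEmptyAlgEquiv R (Fin 0)).injective
  | n + 1 =>
    have := isFormallyReal_fin n
    .of_injective (MvPolynomial.finSuccEquiv R n).toRingHom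
      (MvPolynomial.finSuccEquiv R n).injective

theorem IsFractionRing.isFormallyReal (A K : Type*) [CommRing A] [Field K] [Algebra A K]
    [IsFractionRing A K] [IsFormallyReal A] : IsFormallyReal K :=
  .of_sum_sq_eq_zero fun _ f h i => by
    obtain ⟨b, hb⟩ := IsLocalization.exist_integer_multiples_of_finite (nonZeroDivisors A) f
    choose c hc using hb
    have hsum : ∑ j, c j ^ 2 = 0 := IsFractionRing.injective A K <| by
      simp only [map_sum, map_pow, hc, Algebra.smul_def, mul_pow, ← Finset.mul_sum, h, mul_zero,
        map_zero]
    have hci := hc i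
    rw [IsFormallyReal.eq_zero_of_sum_sq_eq_zero hsum i, map_zero, Algebra.smul_def] at hci
    exact (mul_eq_zero.mp hci.symm).resolve_left (IsLocalization.map_units K b).ne_zero

instance (A : Type*) [CommRing A] [IsDomain A] [IsFormallyReal A] :
    IsFormallyReal (FractionRing A) :=
  IsFractionRing.isFormallyReal A _

end FormallyReal

def IsSumOfSquares {R : Type*} [CommSemiring R] (m : ℕ) (a : R) : Prop :=
  ∃ f : Fin m → R, a = ∑ i, f i ^ 2

namespace IsSumOfSquares

section CommSemiring

variable {R : Type*} [CommSemiring R] {m n : ℕ} {a : R}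

theorem map {S : Type*} [CommSemiring S] (φ : R →+* S) (h : IsSumOfSquares m a) :
    IsSumOfSquares m (φ a) := by
  obtain ⟨f, rfl⟩ := h
  exact ⟨φ ∘ f, by simp⟩

theorem add_iff {c : R} : IsSumOfSquares (m + n) c ↔
    ∃ a b, IsSumOfSquares m a ∧ IsSumOfSquares n b ∧ c = a + b := by
  constructor
  · rintro ⟨f, rfl⟩
    exact ⟨_, _, ⟨_, rfl⟩, ⟨_, rfl⟩, Fin.sum_univ_add _⟩
  · rintro ⟨_, _, ⟨f, rfl⟩, ⟨g, rfl⟩, rfl⟩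
    exact ⟨Fin.append f g, by simp [Fin.sum_univ_add]⟩

theorem mono (hmn : m ≤ n) (h : IsSumOfSquares m a) : IsSumOfSquares n a := by
  obtain ⟨k, rfl⟩ := Nat.exists_eq_add_of_le hmn
  exact add_iff.mpr ⟨a, 0, h, ⟨0, by simp⟩, (add_zero a).symm⟩

theorem mul_sq (h : IsSumOfSquares m a) (b : R) : IsSumOfSquares m (a * b ^ 2) := by
  obtain ⟨f, rfl⟩ := h
  exact ⟨fun i => f i * b, by simp [Finset.sum_mul, mul_pow]⟩

end CommSemiring

theorem inv {K : Type*} [Field K] {m : ℕ} {a : K} (h : IsSumOfSquares m a) :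
    IsSumOfSquares m a⁻¹ := by
  convert h.mul_sq a⁻¹ using 1
  rcases eq_or_ne a 0 with rfl | ha
  · simp
  · field_simp

end IsSumOfSquares

section Pfister

open Matrix

variable {F : Type*} [Field F]

theorem Matrix.mul_transpose_eq_smul_one_of_transpose_mul {ι : Type*} [Fintype ι] [DecidableEq ι]
    {S : Matrix ι ι F} {s : F} (hs : s ≠ 0) (h : Sᵀ * S = s • 1) : S * Sᵀ = s • 1 := by
  have h' := mul_eq_one_comm.mp (show (s⁻¹ • Sᵀ) * S = 1 by
    rw [smul_mul_assoc, h, smul_smul, inv_mul_cancel₀ hs, one_smul])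
  rw [mul_smul_comm] at h'
  rw [← h', smul_smul, mul_inv_cancel₀ hs, one_smul]

theorem Matrix.exists_transpose_mul_self_eq_smul_one_add {ι : Type*} [Fintype ι] [DecidableEq ι]
    {S T : Matrix ι ι F} {s t : F} (hs : s ≠ 0) (ht : t ≠ 0) (hS : Sᵀ * S = s • 1)
    (hT : Tᵀ * T = t • 1) : ∃ B : Matrix (ι ⊕ ι) (ι ⊕ ι) F, Bᵀ * B = (s + t) • 1 := by
  have hT' : ∀ M : Matrix ι ι F, Tᵀ * (T * M) = t • M := fun M => by
    rw [← Matrix.mul_assoc, hT, smul_mul_assoc, Matrix.one_mul]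
  have hS' : ∀ M : Matrix ι ι F, S * (Sᵀ * M) = s • M := fun M => by
    rw [← Matrix.mul_assoc, mul_transpose_eq_smul_one_of_transpose_mul hs hS, smul_mul_assoc,
      Matrix.one_mul]
  refine ⟨fromBlocks S T T (-t⁻¹ • (T * Sᵀ * T)), ?_⟩
  rw [fromBlocks_transpose, fromBlocks_multiply, ← fromBlocks_one, fromBlocks_smul,
    fromBlocks_inj]
  simp only [transpose_smul, transpose_mul, transpose_transpose, Matrix.mul_assoc, smul_mul_assoc,
    mul_smul_comm, Matrix.mul_one, hT, hT', hS', hS, smul_smul, smul_zero]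
  refine ⟨by rw [add_smul], ?_, ?_, by rw [← add_smul]; congr 1; field_simp; ring⟩ <;>
    rw [neg_mul, inv_mul_cancel₀ ht, neg_one_smul, add_neg_cancel]

theorem IsSumOfSquares.exists_transpose_mul_self_eq_smul_one :
    ∀ {k : ℕ} {c : F}, IsSumOfSquares (2 ^ k) c →
      ∃ A : Matrix (Fin (2 ^ k)) (Fin (2 ^ k)) F, Aᵀ * A = c • 1
  | 0, c, ⟨u, hu⟩ => ⟨u 0 • 1, by simp [hu, smul_smul, sq]⟩
  | k + 1, c, hc => by
    obtain ⟨s, t, hs, ht, rfl⟩ := add_iff.mp (by rwa [pow_succ, mul_two] at hc)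
    obtain ⟨S, hS⟩ := hs.exists_transpose_mul_self_eq_smul_one
    obtain ⟨T, hT⟩ := ht.exists_transpose_mul_self_eq_smul_one
    suffices ∃ B : Matrix (Fin (2 ^ k) ⊕ Fin (2 ^ k)) (Fin (2 ^ k) ⊕ Fin (2 ^ k)) F,
        Bᵀ * B = (s + t) • 1 by
      obtain ⟨B, hB⟩ := this
      let e := finSumFinEquiv.trans (finCongr (by ring : 2 ^ k + 2 ^ k = 2 ^ (k + 1)))
      exact ⟨reindex e e B, by simp [submatrix_mul_equiv, hB, submatrix_smul, submatrix_one_equiv]⟩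
    have diag {M : Matrix (Fin (2 ^ k)) (Fin (2 ^ k)) F} {a : F} (hM : Mᵀ * M = a • 1) :
        (fromBlocks M 0 0 M)ᵀ * fromBlocks M 0 0 M = a • 1 := by
      simp [fromBlocks_transpose, fromBlocks_multiply, hM, ← fromBlocks_one, fromBlocks_smul]
    rcases eq_or_ne s 0 with rfl | hs0
    · exact ⟨_, by rw [zero_add]; exact diag hT⟩
    rcases eq_or_ne t 0 with rfl | ht0
    · exact ⟨_, by rw [add_zero]; exact diag hS⟩
    exact exists_transpose_mul_self_eq_smul_one_add hs0 ht0 hS hT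

theorem IsSumOfSquares.mul {k : ℕ} {c d : F} (hc : IsSumOfSquares (2 ^ k) c)
    (hd : IsSumOfSquares (2 ^ k) d) : IsSumOfSquares (2 ^ k) (c * d) := by
  obtain ⟨A, hA⟩ := hc.exists_transpose_mul_self_eq_smul_one
  obtain ⟨v, rfl⟩ := hd
  have hdot : ∀ w : Fin (2 ^ k) → F, ∑ i, w i ^ 2 = w ⬝ᵥ w := fun w => by simp [dotProduct, sq]
  refine ⟨A *ᵥ v, ?_⟩
  rw [hdot, hdot, dotProduct_mulVec, ← mulVec_transpose, mulVec_mulVec, hA, smul_mulVec,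
    one_mulVec, smul_dotProduct, smul_eq_mul]

end Pfister

section Cassels

/-- Cassels' descent step: the line through the point `(g q + r) / g` of the quadric
`∑ yᵢ² = p` and the point `q` meets the quadric again at `(h q + (∑ qⱼ² - p) r) / h`. -/
theorem exists_secant_of_mul_sq_eq_sum_sq {R ι : Type*} [CommRing R] [Fintype ι] {p g : R}
    {q r : ι → R} (hpg : p * g ^ 2 = ∑ i, (g * q i + r i) ^ 2) :
    ∃ h : R, g * h = ∑ i, r i ^ 2 ∧
      p * h ^ 2 = ∑ i, (h * q i + (∑ j, q j ^ 2 - p) * r i) ^ 2 := by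
  have hexp : ∀ a b : R, ∑ i, (a * q i + b * r i) ^ 2 =
      a ^ 2 * ∑ i, q i ^ 2 + 2 * a * b * ∑ i, q i * r i + b ^ 2 * ∑ i, r i ^ 2 := fun a b => by
    simp only [Finset.mul_sum, ← Finset.sum_add_distrib]
    exact Finset.sum_congr rfl fun i _ => by ring
  have E := hpg
  rw [show ∑ i, (g * q i + r i) ^ 2 = ∑ i, (g * q i + 1 * r i) ^ 2 by simp, hexp] at E
  refine ⟨p * g - g * ∑ i, q i ^ 2 - 2 * ∑ i, q i * r i, by linear_combination E, ?_⟩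
  rw [hexp]
  linear_combination (p - ∑ i, q i ^ 2) ^ 2 * E

variable {F : Type*} [Field F] [IsFormallyReal F] {m : ℕ}

theorem IsSumOfSquares.of_mul_sq {p g : F[X]} (hg : g ≠ 0) (h : IsSumOfSquares m (p * g ^ 2)) :
    IsSumOfSquares m p := by
  induction hd : g.natDegree using Nat.strong_induction_on generalizing g with
  | _ d ih =>
  obtain ⟨f, hf⟩ := h
  have hdiv : p * g ^ 2 = ∑ i, (g * (f i / g) + f i % g) ^ 2 := by
    simp only [EuclideanDomain.div_add_mod, hf]
  by_cases hr : ∀ i, f i % g = 0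
  · refine ⟨fun i => f i / g, mul_right_cancel₀ (pow_ne_zero 2 hg) ?_⟩
    rw [hdiv, Finset.sum_mul]
    exact Finset.sum_congr rfl fun i _ => by rw [hr i]; ring
  push Not at hr
  obtain ⟨j, hj⟩ := hr
  obtain ⟨h, hgh, hph⟩ := exists_secant_of_mul_sq_eq_sum_sq hdiv
  have hρ : ∑ i, (f i % g) ^ 2 ≠ 0 := fun h0 => hj (IsFormallyReal.eq_zero_of_sum_sq_eq_zero h0 j)
  have hh : h ≠ 0 := by
    rintro rfl
    exact hρ (by rw [← hgh, mul_zero])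
  have hdeg : ∀ i, (f i % g).natDegree < d ∨ f i % g = 0 := fun i => by
    rw [← hd]
    exact (em' _).imp_left fun hi => natDegree_lt_natDegree hi (degree_mod_lt _ hg)
  have hρdeg : (∑ i, (f i % g) ^ 2).natDegree ≤ 2 * (d - 1) :=
    natDegree_sum_le_of_forall_le _ _ fun i _ => natDegree_pow_le.trans <| by
      rcases hdeg i with hi | hi
      · omega
      · simp [hi]
  have hd0 : 0 < d := by have := (hdeg j).resolve_right hj; omega
  have hhd : h.natDegree < d := by
    have := natDegree_mul hg hh
    rw [hgh, hd] at this
    omega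
  exact ih _ hhd hh ⟨_, hph⟩ rfl

theorem IsSumOfSquares.of_algebraMap {K : Type*} [Field K] [Algebra F[X] K]
    [IsFractionRing F[X] K] {p : F[X]} (h : IsSumOfSquares m (algebraMap F[X] K p)) :
    IsSumOfSquares m p := by
  obtain ⟨f, hf⟩ := h
  obtain ⟨b, hb⟩ := IsLocalization.exist_integer_multiples_of_finite (nonZeroDivisors F[X]) f
  choose c hc using hb
  refine of_mul_sq (nonZeroDivisors.ne_zero b.2) ⟨c, IsFractionRing.injective F[X] K ?_⟩
  simp only [map_mul, map_pow, map_sum, hf, hc, Algebra.smul_def, mul_pow, Finset.sum_mul, mul_comm]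

end Cassels

theorem Polynomial.exists_eval_sq_eq_sq {K : Type*} [Field K] (h2 : (2 : K) ≠ 0) {f : K[X]}
    (hf : f.natDegree ≤ 1) : ∃ c, f.eval c ^ 2 = c ^ 2 := by
  rw [eq_X_add_C_of_natDegree_le_one hf]
  set a := f.coeff 1
  set b := f.coeff 0
  simp only [eval_add, eval_mul, eval_C, eval_X]
  by_cases ha : a = 1
  · refine ⟨-b / 2, ?_⟩
    rw [ha]
    field_simp
    ring
  · have : 1 - a ≠ 0 := sub_ne_zero.mpr (Ne.symm ha)
    refine ⟨b / (1 - a), ?_⟩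
    field_simp
    ring

theorem IsSumOfSquares.of_X_sq_add_C {K : Type*} [Field K] [IsFormallyReal K] {m : ℕ} {d : K}
    (h : IsSumOfSquares (m + 1) (X ^ 2 + C d)) : IsSumOfSquares m d := by
  obtain ⟨w, hw⟩ := h
  have hdeg : 2 * (w 0).natDegree ≤ 2 := by
    simpa [← hw, natDegree_X_pow_add_C] using two_mul_natDegree_le_natDegree_sum_sq w 0
  -- at `X = c` the square `(w 0).eval c ^ 2` cancels against `c ^ 2`
  obtain ⟨c, hc⟩ := exists_eval_sq_eq_sq IsFormallyReal.two_ne_zero (f := w 0) (by omega)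
  refine ⟨fun i => (w i.succ).eval c, ?_⟩
  have := congrArg (eval c) hw
  simp only [eval_add, eval_pow, eval_X, eval_C, eval_finsetSum, Fin.sum_univ_succ, hc] at this
  linear_combination this

theorem MvPolynomial.finSuccEquiv_sum_X_sq (R : Type*) [CommSemiring R] (n : ℕ) :
    finSuccEquiv R n (∑ i : Fin (n + 1), X i ^ 2) =
      Polynomial.X ^ 2 + Polynomial.C (∑ i : Fin n, X i ^ 2) := by
  simp [Fin.sum_univ_succ, finSuccEquiv_X_zero, finSuccEquiv_X_succ]

theorem not_isSumOfSquares_sum_X_sq (F : Type*) [Field F] [IsFormallyReal F] {m n : ℕ}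
    (hmn : m < n) :
    ¬ IsSumOfSquares m (algebraMap (MvPolynomial (Fin n) F) (FractionRing (MvPolynomial (Fin n) F))
      (∑ i, MvPolynomial.X i ^ 2)) := by
  induction m generalizing n with
  | zero =>
    rintro ⟨f, hf⟩
    rw [Fin.sum_univ_zero, map_eq_zero_iff _ (IsFractionRing.injective _ _)] at hf
    exact MvPolynomial.X_ne_zero _ (IsFormallyReal.eq_zero_of_sum_sq_eq_zero hf ⟨0, hmn⟩)
  | succ m ih =>
    obtain ⟨n, rfl⟩ : ∃ n', n = n' + 1 := ⟨n - 1, by omega⟩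
    intro hs
    let K := FractionRing (MvPolynomial (Fin n) F)
    let ψ : MvPolynomial (Fin (n + 1)) F →+* RatFunc K :=
      (algebraMap K[X] (RatFunc K)).comp
        ((mapRingHom (algebraMap _ K)).comp (MvPolynomial.finSuccEquiv F n).toRingHom)
    have hψ : Function.Injective ψ :=
      (RatFunc.algebraMap_injective K).comp <| (map_injective _ (IsFractionRing.injective _ K)).comp
        (MvPolynomial.finSuccEquiv F n).injective
    refine ih (n := n) (by omega) (IsSumOfSquares.of_X_sq_add_C
      (IsSumOfSquares.of_algebraMap (K := RatFunc K) ?_))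
    have := hs.map (IsFractionRing.lift hψ)
    rw [IsFractionRing.lift_algebraMap] at this
    convert this using 1
    simp only [ψ, RingHom.coe_comp, Function.comp_apply, RingEquiv.toRingHom_eq_coe,
      RingEquiv.coe_toRingHom, AlgEquiv.coe_ringEquiv, MvPolynomial.finSuccEquiv_sum_X_sq,
      coe_mapRingHom, Polynomial.map_add, Polynomial.map_pow, map_X, map_C]
    rfl

end SumsOfSquares

open MvPolynomial

/-- for `n > 2^k` and `r ≤ 2^k` there are no nonzero sums of `r` squares
`g₁, g₂` with `(x₁²+⋯+xₙ²)·g₁ = g₂`. -/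
theorem stmt_5 (n k r : ℕ) (hn : 2 ^ k < n) (hr : r ≤ 2 ^ k) :
    ¬ ∃ g₁ g₂ : MvPolynomial (Fin n) ℝ, g₁ ≠ 0 ∧ g₂ ≠ 0 ∧
      (∃ q : Fin r → MvPolynomial (Fin n) ℝ, g₁ = ∑ i, q i ^ 2) ∧
      (∃ q : Fin r → MvPolynomial (Fin n) ℝ, g₂ = ∑ i, q i ^ 2) ∧
      (∑ i : Fin n, X i ^ 2) * g₁ = g₂ := by
  rintro ⟨g₁, g₂, hg₁, -, hq₁, hq₂, heq⟩
  let φ := algebraMap (MvPolynomial (Fin n) ℝ) (FractionRing (MvPolynomial (Fin n) ℝ))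
  have hφg₁ : φ g₁ ≠ 0 := (map_ne_zero_iff φ (IsFractionRing.injective _ _)).mpr hg₁
  have h₁ : IsSumOfSquares (2 ^ k) (φ g₁)⁻¹ := ((IsSumOfSquares.mono hr hq₁).map φ).inv
  have h₂ : IsSumOfSquares (2 ^ k) (φ g₂) := (IsSumOfSquares.mono hr hq₂).map φ
  have hquot : φ (∑ i : Fin n, X i ^ 2) = φ g₂ * (φ g₁)⁻¹ := by
    rw [← heq, map_mul, mul_inv_cancel_right₀ hφg₁]
  exact not_isSumOfSquares_sum_X_sq ℝ hn (hquot ▸ h₂.mul h₁)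
end

section
/- There do not exist real symmetric 3×3 matrices A₀, A₁, A₂, A₃, A₄ such that the closed unit ball in ℝ⁴ equals {p ∈ ℝ⁴ : A₀ + A₁p₁ + A₂p₂ + A₃p₃ + A₄p₄ ⪰ 0}. -/
/-!
If `A 0 + ∑ pᵢ Aᵢ₊₁ ⪰ 0` cuts out the unit ball of `ℝᵐ`, then for every unit vector `p` the
matrix `A(p)` has a kernel vector `v` outside the common kernel of the `Aₖ`: otherwise `A(p)` would
be positive definite modulo that common kernel, and `A((1 + ε) p)` would still be positive
semidefinite. The affine function `q ↦ vᵀ A(q) v` is nonnegative on the ball and vanishes at the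
boundary point `p`, so `(vᵀ Aᵢ₊₁ v)ᵢ = -(vᵀ A₀ v) p` with `vᵀ A₀ v > 0`. Rescaling `v`, the
quadratic map `v ↦ (-vᵀ Aᵢ₊₁ v)ᵢ` from `ℝⁿ` to `ℝᵐ` is onto, which by Sard's theorem forces `m ≤ n`.
-/

open Matrix

theorem eq_neg_smul_of_nonneg_on_unitBall {E : Type*} [NormedAddCommGroup E]
    [InnerProductSpace ℝ E] {p c : E} {c₀ : ℝ} (hp : ‖p‖ = 1)
    (hball : ∀ q : E, ‖q‖ ≤ 1 → 0 ≤ c₀ + inner ℝ q c) (hp₀ : c₀ + inner ℝ p c = 0) :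
    c = -c₀ • p := by
  have hc : ‖c‖ ≤ c₀ := by
    have hq : ‖-‖c‖⁻¹ • c‖ ≤ 1 := by
      rw [norm_smul, norm_neg, norm_inv, norm_norm]
      exact inv_mul_le_one_of_le₀ le_rfl (norm_nonneg c)
    have := hball _ hq
    rw [real_inner_smul_left, real_inner_self_eq_norm_sq] at this
    rcases eq_or_ne ‖c‖ 0 with h | h
    · simpa [h] using this
    · field_simp at this
      linarith
  have hsq : ‖c + c₀ • p‖ ^ 2 ≤ 0 := by
    rw [norm_add_sq_real, real_inner_smul_right, real_inner_comm p c, norm_smul, hp, mul_one,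
      Real.norm_eq_abs, sq_abs]
    nlinarith [norm_nonneg c]
  rw [neg_smul, eq_neg_iff_add_eq_zero, ← norm_eq_zero]
  exact pow_eq_zero_iff two_ne_zero |>.1 (le_antisymm hsq (sq_nonneg _))

namespace Matrix

variable {ι : Type*} [Fintype ι]

theorem posSemidef_iff_of_isSymm {R : Type*} [CommRing R] [PartialOrder R] [StarRing R]
    [TrivialStar R] {M : Matrix ι ι R} (hM : M.IsSymm) :
    M.PosSemidef ↔ ∀ x, 0 ≤ x ⬝ᵥ M *ᵥ x := by
  simp [posSemidef_iff_dotProduct_mulVec, hM]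

theorem IsSymm.dotProduct_mulVec_add_of_mulVec_eq_zero {α : Type*} [CommSemiring α]
    {Q : Matrix ι ι α} (hQ : Q.IsSymm) {k : ι → α} (hk : Q *ᵥ k = 0) (w : ι → α) :
    (k + w) ⬝ᵥ Q *ᵥ (k + w) = w ⬝ᵥ Q *ᵥ w := by
  rw [mulVec_add, hk, zero_add, add_dotProduct, dotProduct_mulVec, ← mulVec_transpose, hQ.eq, hk,
    zero_dotProduct, zero_add]

theorem posSemidef_of_nonneg_on_sphere {Q : Matrix ι ι ℝ} (hQ : Q.IsSymm)
    {V W : Submodule ℝ (ι → ℝ)} (hVW : V ⊔ W = ⊤) (hV : ∀ k ∈ V, Q *ᵥ k = 0)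
    (hW : ∀ u ∈ W, ‖u‖ = 1 → 0 ≤ u ⬝ᵥ Q *ᵥ u) : Q.PosSemidef := by
  refine (posSemidef_iff_of_isSymm hQ).2 fun x => ?_
  obtain ⟨k, hk, w, hw, rfl⟩ := Submodule.mem_sup.1 (hVW ▸ Submodule.mem_top : x ∈ V ⊔ W)
  rw [hQ.dotProduct_mulVec_add_of_mulVec_eq_zero (hV k hk)]
  rcases eq_or_ne w 0 with rfl | hw₀
  · simp
  have hnorm : ‖w‖ ≠ 0 := norm_ne_zero_iff.2 hw₀
  have hu := hW (‖w‖⁻¹ • w) (W.smul_mem _ hw) (by rw [norm_smul, norm_inv, norm_norm,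
    inv_mul_cancel₀ hnorm])
  rw [mulVec_smul, dotProduct_smul, smul_dotProduct, smul_eq_mul, smul_eq_mul, ← mul_assoc] at hu
  exact (mul_nonneg_iff_of_pos_left (by positivity)).1 hu

theorem continuous_dotProduct_mulVec_self (Q : Matrix ι ι ℝ) :
    Continuous fun u : ι → ℝ => u ⬝ᵥ Q *ᵥ u :=
  continuous_id.dotProduct (continuous_const.matrix_mulVec continuous_id)

/-- Compactness of the unit sphere of a supplement of `ker P` bounds the ratio of the two forms. -/
theorem PosSemidef.exists_pos_posSemidef_add_smul {P B : Matrix ι ι ℝ} (hP : P.PosSemidef)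
    (hB : B.IsSymm) (hker : ∀ v, P *ᵥ v = 0 → B *ᵥ v = 0) :
    ∃ ε : ℝ, 0 < ε ∧ (P + ε • B).PosSemidef := by
  have hPs : P.IsSymm := isHermitian_iff_isSymm.1 hP.isHermitian
  obtain ⟨W, hW⟩ := (LinearMap.ker P.mulVecLin).exists_isCompl
  set K := (W : Set (ι → ℝ)) ∩ Metric.sphere 0 1
  have hpos : ∀ u ∈ K, 0 < u ⬝ᵥ P *ᵥ u := by
    rintro u ⟨huW, hu⟩
    refine lt_of_le_of_ne (by simpa using hP.dotProduct_mulVec_nonneg u) fun h => ?_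
    have hu₀ : P *ᵥ u = 0 := (hP.dotProduct_mulVec_zero_iff u).1 (by simpa using h.symm)
    have : u = 0 := (Submodule.disjoint_def.1 hW.disjoint) u hu₀ huW
    simp [this] at hu
  have hratio : ContinuousOn (fun u => (u ⬝ᵥ B *ᵥ u) / (u ⬝ᵥ P *ᵥ u)) K :=
    (continuous_dotProduct_mulVec_self B).continuousOn.div
      (continuous_dotProduct_mulVec_self P).continuousOn fun u hu => (hpos u hu).ne'
  obtain ⟨C, hC⟩ := ((isCompact_sphere 0 1).inter_left
    W.closed_of_finiteDimensional).exists_bound_of_continuousOn hratio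
  refine ⟨(|C| + 1)⁻¹, by positivity, posSemidef_of_nonneg_on_sphere (hPs.add (hB.smul _))
    hW.sup_eq_top (fun k (hk : P *ᵥ k = 0) => by simp [add_mulVec, smul_mulVec, hker k hk, hk]) ?_⟩
  intro u huW hu
  have hK : u ∈ K := ⟨huW, by simpa using hu⟩
  have hbound := hC u hK
  rw [Real.norm_eq_abs, abs_div, abs_of_pos (hpos u hK), div_le_iff₀ (hpos u hK)] at hbound
  have hBu : -(|C| * (u ⬝ᵥ P *ᵥ u)) ≤ u ⬝ᵥ B *ᵥ u := by
    nlinarith [neg_abs_le (u ⬝ᵥ B *ᵥ u), le_abs_self C, hpos u hK]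
  have hεC : (|C| + 1)⁻¹ * |C| ≤ 1 := by
    rw [inv_mul_le_iff₀ (by positivity)]; linarith
  rw [add_mulVec, smul_mulVec, dotProduct_add, dotProduct_smul, smul_eq_mul]
  nlinarith [mul_le_mul_of_nonneg_left hBu (by positivity : (0 : ℝ) ≤ (|C| + 1)⁻¹),
    mul_le_mul_of_nonneg_right hεC (hpos u hK).le]

end Matrix

namespace Spectrahedral

variable {ι : Type*} {m : ℕ}

def pencil (A : Fin (m + 1) → Matrix ι ι ℝ) (p : Fin m → ℝ) : Matrix ι ι ℝ :=
  A 0 + ∑ i, p i • A i.succ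

variable {A : Fin (m + 1) → Matrix ι ι ℝ}

theorem isSymm_sum_smul_succ (hA : ∀ k, (A k).IsSymm) (p : Fin m → ℝ) :
    (∑ i, p i • A i.succ).IsSymm :=
  Finset.sum_induction _ IsSymm (fun _ _ => IsSymm.add) isSymm_zero
    fun i _ => (hA i.succ).smul (p i)

theorem pencil_smul (p : Fin m → ℝ) (t : ℝ) :
    pencil A (t • p) = pencil A p + (t - 1) • ∑ i, p i • A i.succ := by
  simp only [pencil, Finset.smul_sum, Pi.smul_apply, smul_eq_mul, mul_smul, sub_smul, one_smul,
    Finset.sum_sub_distrib]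
  abel

variable [Fintype ι]

variable (A) in
def RepresentsUnitBall : Prop :=
  ∀ p : EuclideanSpace ℝ (Fin m), ‖p‖ ≤ 1 ↔ (pencil A p).PosSemidef

variable (A) in
def quadFormMap (v : ι → ℝ) : EuclideanSpace ℝ (Fin m) :=
  WithLp.toLp 2 fun i => -(v ⬝ᵥ A i.succ *ᵥ v)

theorem dotProduct_pencil_mulVec (p : Fin m → ℝ) (v : ι → ℝ) :
    v ⬝ᵥ pencil A p *ᵥ v = v ⬝ᵥ A 0 *ᵥ v + ∑ i, p i * (v ⬝ᵥ A i.succ *ᵥ v) := by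
  simp [pencil, add_mulVec, sum_mulVec, smul_mulVec, dotProduct_sum]

theorem exists_mulVec_pencil_eq_zero (hA : ∀ k, (A k).IsSymm) (hrep : RepresentsUnitBall A)
    {p : EuclideanSpace ℝ (Fin m)} (hp : ‖p‖ = 1) :
    ∃ v, pencil A p *ᵥ v = 0 ∧ ∃ k, A k *ᵥ v ≠ 0 := by
  by_contra! hker
  obtain ⟨ε, hε, hpsd⟩ := ((hrep p).1 hp.le).exists_pos_posSemidef_add_smul
    (isSymm_sum_smul_succ hA p) fun v hv => by simp [sum_mulVec, smul_mulVec, hker v hv]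
  have hball := (hrep ((1 + ε) • p)).2 (by simpa [pencil_smul] using hpsd)
  rw [norm_smul, hp, Real.norm_of_nonneg (by positivity)] at hball
  linarith

theorem quadFormMap_eq_smul (hrep : RepresentsUnitBall A) {p : EuclideanSpace ℝ (Fin m)}
    (hp : ‖p‖ = 1) {v : ι → ℝ} (hv : pencil A p *ᵥ v = 0) :
    quadFormMap A v = (v ⬝ᵥ A 0 *ᵥ v) • p := by
  have hform : ∀ q : EuclideanSpace ℝ (Fin m),
      v ⬝ᵥ pencil A q *ᵥ v = v ⬝ᵥ A 0 *ᵥ v + inner ℝ q (-quadFormMap A v) := by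
    intro q
    simp [dotProduct_pencil_mulVec, quadFormMap, PiLp.inner_apply, mul_comm]
  have key := eq_neg_smul_of_nonneg_on_unitBall hp
    (fun q hq => by rw [← hform]; simpa using ((hrep q).1 hq).dotProduct_mulVec_nonneg v)
    (by rw [← hform, hv, dotProduct_zero])
  rw [← neg_neg (quadFormMap A v), key, neg_smul, neg_neg]

theorem dotProduct_mulVec_zero_pos_of_mulVec_pencil_eq_zero (hrep : RepresentsUnitBall A)
    {p : EuclideanSpace ℝ (Fin m)} (hp : ‖p‖ = 1) {v : ι → ℝ} (hv : pencil A p *ᵥ v = 0)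
    (hk : ∃ k, A k *ᵥ v ≠ 0) :
    0 < v ⬝ᵥ A 0 *ᵥ v := by
  have hA0 : (A 0).PosSemidef := by simpa [pencil] using (hrep 0).1 (by simp)
  refine lt_of_le_of_ne (by simpa using hA0.dotProduct_mulVec_nonneg v) fun h0 => ?_
  have hsucc : ∀ i : Fin m, v ⬝ᵥ A i.succ *ᵥ v = 0 := fun i => by
    simpa [quadFormMap, ← h0] using congrArg (· i) (quadFormMap_eq_smul hrep hp hv)
  have hker : ∀ q : EuclideanSpace ℝ (Fin m), ‖q‖ ≤ 1 → pencil A q *ᵥ v = 0 := fun q hq =>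
    (((hrep q).1 hq).dotProduct_mulVec_zero_iff v).1 (by
      simp [dotProduct_pencil_mulVec, ← h0, hsucc])
  obtain ⟨k, hk⟩ := hk
  apply hk
  have hA0v : A 0 *ᵥ v = 0 := by simpa [pencil] using hker 0 (by simp)
  refine Fin.cases hA0v (fun i => ?_) k
  simpa [pencil, add_mulVec, sum_mulVec, smul_mulVec, PiLp.single_apply, hA0v]
    using hker (EuclideanSpace.single i 1) (by simp)

theorem quadFormMap_surjective (hA : ∀ k, (A k).IsSymm) (hrep : RepresentsUnitBall A) :
    Function.Surjective (quadFormMap A) := by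
  intro x
  rcases eq_or_ne x 0 with rfl | hx
  · exact ⟨0, by ext; simp [quadFormMap]⟩
  have hx₀ : 0 < ‖x‖ := norm_pos_iff.2 hx
  set p : EuclideanSpace ℝ (Fin m) := ‖x‖⁻¹ • x with hpx
  have hp : ‖p‖ = 1 := by rw [norm_smul, norm_inv, norm_norm, inv_mul_cancel₀ hx₀.ne']
  obtain ⟨v, hv, hk⟩ := exists_mulVec_pencil_eq_zero hA hrep hp
  have hc := dotProduct_mulVec_zero_pos_of_mulVec_pencil_eq_zero hrep hp hv hk
  set s := √(‖x‖ / (v ⬝ᵥ A 0 *ᵥ v))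
  have hsv : pencil A p *ᵥ (s • v) = 0 := by rw [mulVec_smul, hv, smul_zero]
  have hs : (s • v) ⬝ᵥ A 0 *ᵥ (s • v) = ‖x‖ := by
    rw [mulVec_smul, dotProduct_smul, smul_dotProduct, smul_eq_mul, smul_eq_mul, ← mul_assoc,
      ← sq, Real.sq_sqrt (by positivity), div_mul_cancel₀ _ hc.ne']
  refine ⟨s • v, ?_⟩
  rw [quadFormMap_eq_smul hrep hp hsv, hs, hpx, smul_smul, mul_inv_cancel₀ hx₀.ne', one_smul]

variable (A) in
theorem contDiff_quadFormMap : ContDiff ℝ 1 (quadFormMap A) := by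
  refine PiLp.contDiff_toLp.comp (contDiff_pi.2 fun i => ?_)
  simp only [dotProduct, mulVec]
  fun_prop

theorem le_card_of_representsUnitBall (hA : ∀ k, (A k).IsSymm) (hrep : RepresentsUnitBall A) :
    m ≤ Fintype.card ι := by
  by_contra! hlt
  have hdense := (contDiff_quadFormMap A).dense_compl_range_of_finrank_lt_finrank
    (by simpa using hlt)
  rw [(quadFormMap_surjective hA hrep).range_eq, Set.compl_univ] at hdense
  exact Set.not_nonempty_empty hdense.nonempty

end Spectrahedral

/-- the unit ball in `ℝ⁴` has no spectrahedral representation by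
`3×3` real symmetric matrices. -/
theorem stmt_9 :
    ¬ ∃ A : Fin 5 → Matrix (Fin 3) (Fin 3) ℝ, (∀ k, (A k).IsSymm) ∧
      ∀ p : Fin 4 → ℝ,
        (∑ i, p i ^ 2 ≤ 1) ↔ (A 0 + ∑ i : Fin 4, p i • A i.succ).PosSemidef := by
  rintro ⟨A, hA, hrep⟩
  have := Spectrahedral.le_card_of_representsUnitBall hA fun p =>
    (by rw [EuclideanSpace.norm_eq, Real.sqrt_le_one]; simp : ‖p‖ ≤ 1 ↔ _).trans (hrep p)
  simp at this
end

section
/- Let A₁,…,Aₙ be real symmetric r×r matrices such that det(I_r + A₁x₁ + ⋯ + Aₙxₙ) is a polynomial of degree d. Then rank(A₁p₁ + ⋯ + Aₙpₙ) ≤ d for all p ∈ ℝⁿ. -/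
/-! Substituting `xᵢ = pᵢ t` restricts `det (I + ∑ Aᵢ xᵢ)` to the univariate polynomial
`det (I + t M)` with `M = ∑ pᵢ Aᵢ`, whose degree is at most `d`. Diagonalizing the symmetric
matrix `M` gives `det (I + t M) = ∏ (1 + λᵢ t)`, whose degree is the number of nonzero
eigenvalues `λᵢ`, that is, the rank of `M`. -/

open MvPolynomial

namespace Polynomial

lemma natDegree_prod_one_add_C_mul_X {R ι : Type*} [CommRing R] [IsDomain R] [DecidableEq R]
    [Fintype ι] (a : ι → R) :
    (∏ i, (1 + C (a i) * X)).natDegree = Fintype.card {i // a i ≠ 0} := by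
  have hne : ∀ i ∈ Finset.univ, (1 + C (a i) * X : R[X]) ≠ 0 := fun i _ h => by
    simpa using congrArg (eval 0) h
  have hdeg : ∀ i, (1 + C (a i) * X : R[X]).natDegree = if a i ≠ 0 then 1 else 0 := by
    intro i
    split_ifs with h
    · rw [add_comm, ← C_1, natDegree_linear h]
    · simp_all
  rw [natDegree_prod _ _ hne, Fintype.card_subtype, Finset.card_filter]
  exact Finset.sum_congr rfl fun i _ => hdeg i

end Polynomial

namespace MvPolynomial

lemma natDegree_aeval_le {R σ : Type*} [CommSemiring R] {q : σ → Polynomial R} {k : ℕ}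
    (hq : ∀ i, (q i).natDegree ≤ k) (P : MvPolynomial σ R) :
    (aeval q P).natDegree ≤ k * P.totalDegree := by
  rw [aeval_def, eval₂_eq]
  refine Polynomial.natDegree_sum_le_of_forall_le _ _ fun d hd => ?_
  calc (algebraMap R (Polynomial R) (P.coeff d) * ∏ i ∈ d.support, q i ^ d i).natDegree
      ≤ (∏ i ∈ d.support, q i ^ d i).natDegree := Polynomial.natDegree_C_mul_le _ _
    _ ≤ ∑ i ∈ d.support, (q i ^ d i).natDegree := Polynomial.natDegree_prod_le _ _
    _ ≤ ∑ i ∈ d.support, k * d i :=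
        Finset.sum_le_sum fun i _ =>
          (Polynomial.natDegree_pow_le_of_le _ (hq i)).trans_eq (mul_comm _ _)
    _ = k * d.sum fun _ e => e := (Finset.mul_sum _ _ _).symm
    _ ≤ k * P.totalDegree := Nat.mul_le_mul_left k (le_totalDegree hd)

lemma aeval_det_one_add_sum_X_smul {R σ m : Type*} [CommRing R] [Fintype σ] [Fintype m]
    [DecidableEq m] (A : σ → Matrix m m R) (p : σ → R) :
    aeval (fun i => Polynomial.C (p i) * Polynomial.X)
        (1 + ∑ i, (X i : MvPolynomial σ R) • (A i).map C :
          Matrix m m (MvPolynomial σ R)).det =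
      (1 + (Polynomial.X : Polynomial R) • (∑ i, p i • A i).map Polynomial.C).det := by
  rw [AlgHom.map_det]
  congr 1
  ext a b : 1
  simp only [AlgHom.mapMatrix_apply, Matrix.map_apply, Matrix.add_apply, Matrix.one_apply,
    Matrix.smul_apply, Matrix.sum_apply, map_add, map_one, map_sum,
    smul_eq_mul, map_mul, aeval_X, aeval_C, Polynomial.algebraMap_eq, Finset.mul_sum]
  exact congrArg (_ + ·) (Finset.sum_congr rfl fun i _ => by ring)

end MvPolynomial

namespace Matrix

variable {m n R : Type*} [Fintype m] [Fintype n] [DecidableEq m] [DecidableEq n] [CommRing R]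

lemma det_one_add_X_smul_map_mul_comm (M : Matrix m n R) (N : Matrix n m R) :
    det (1 + (Polynomial.X : Polynomial R) • (M * N).map Polynomial.C) =
      det (1 + (Polynomial.X : Polynomial R) • (N * M).map Polynomial.C) := by
  rw [Matrix.map_mul, Matrix.map_mul, ← Matrix.smul_mul, det_one_add_mul_comm, Matrix.mul_smul]

lemma det_one_add_X_smul_diagonal (a : m → R) :
    det (1 + (Polynomial.X : Polynomial R) • (diagonal a).map Polynomial.C) =
      ∏ i, (1 + Polynomial.C (a i) * Polynomial.X) := by
  rw [diagonal_map (map_zero _), ← diagonal_smul, ← diagonal_one, diagonal_add, det_diagonal]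
  exact Finset.prod_congr rfl fun i _ => by rw [Pi.smul_apply, smul_eq_mul, mul_comm]

lemma IsHermitian.natDegree_det_one_add_X_smul {𝕜 : Type*} [RCLike 𝕜] {M : Matrix m m 𝕜}
    (hM : M.IsHermitian) :
    (det (1 + (Polynomial.X : Polynomial 𝕜) • M.map Polynomial.C)).natDegree = M.rank := by
  classical
  conv_lhs => rw [hM.spectral_theorem]
  rw [Unitary.conjStarAlgAut_apply, det_one_add_X_smul_map_mul_comm,
    ← Matrix.mul_assoc, det_one_add_X_smul_map_mul_comm,
    Unitary.coe_star_mul_self, Matrix.mul_one, det_one_add_X_smul_diagonal,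
    Polynomial.natDegree_prod_one_add_C_mul_X, hM.rank_eq_card_non_zero_eigs]
  exact Fintype.card_congr (Equiv.subtypeEquivRight fun i => by simp)

end Matrix

/-- if `det(I + ∑ Aᵢxᵢ)` has degree `d`, then every real pencil
evaluation `∑ Aᵢpᵢ` has rank at most `d`. -/
theorem stmt_10 (n r d : ℕ) (A : Fin n → Matrix (Fin r) (Fin r) ℝ)
    (hA : ∀ k, (A k).IsSymm)
    (hdeg : ((1 + ∑ i : Fin n, (X i : MvPolynomial (Fin n) ℝ) • (A i).map C
        : Matrix (Fin r) (Fin r) (MvPolynomial (Fin n) ℝ)).det).totalDegree = d) :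
    ∀ p : Fin n → ℝ, (∑ i : Fin n, p i • A i).rank ≤ d := by
  intro p
  have hM : (∑ i, p i • A i).IsHermitian :=
    isSelfAdjoint_sum _ fun i _ => (Matrix.isHermitian_iff_isSymm.mpr (hA i)).smul (.all (p i))
  have hline : ∀ i, (Polynomial.C (p i) * Polynomial.X).natDegree ≤ 1 := fun i =>
    (Polynomial.natDegree_C_mul_le _ _).trans Polynomial.natDegree_X_le
  rw [← hM.natDegree_det_one_add_X_smul, ← aeval_det_one_add_sum_X_smul, ← hdeg]
  exact (natDegree_aeval_le hline _).trans_eq (one_mul _)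
end
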